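/- Let F be a smooth strongly pseudoconvex complex Finsler metric on a domain Ω ⊆ ℂⁿ, and let φ: U_r → Ω be a holomorphic solution of (†). Then φ also satisfies equation (‡) (equivalently, φ is a segment of geodesic complex curve) if and only if F is Kähler along φ, i.e. if and only if T_{αiμ̄}(φ(ζ); φ'(ζ))·(φ'(ζ))^i·conj((φ'(ζ))^μ) = 0 for all α = 1,…,n and all ζ ∈ U_r. -/

import Mathlib

open Complex Filter MeasureTheory Metric Set ComplexConjugate
open scoped ComplexOrder

noncomputable section

/-- The unit disk in `ℂ`. -/
def UDisk : Set ℂ := Metric.ball 0 1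

variable {n : ℕ}

/-- A domain in `ℂⁿ`: a nonempty open connected set. -/
def IsDomainSet (Ω : Set (Fin n → ℂ)) : Prop := IsOpen Ω ∧ IsConnected Ω

/-- A complex Finsler metric on `Ω`: upper semicontinuous, positive on nonzero vectors,
and absolutely homogeneous of degree one in the vector variable. -/
def IsFinsler (Ω : Set (Fin n → ℂ)) (F : (Fin n → ℂ) → (Fin n → ℂ) → ℝ) : Prop :=
  UpperSemicontinuousOn (fun x : (Fin n → ℂ) × (Fin n → ℂ) => F x.1 x.2) (Ω ×ˢ Set.univ) ∧
    (∀ p ∈ Ω, ∀ v : Fin n → ℂ, 0 ≤ F p v) ∧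
    (∀ p ∈ Ω, ∀ v : Fin n → ℂ, v ≠ 0 → 0 < F p v) ∧
    ∀ p ∈ Ω, ∀ v : Fin n → ℂ, ∀ l : ℂ, F p (l • v) = ‖l‖ * F p v

/-- A holomorphic map from the unit disk into `Ω`. -/
def HoloDisk (Ω : Set (Fin n → ℂ)) (φ : ℂ → Fin n → ℂ) : Prop :=
  DifferentiableOn ℂ φ UDisk ∧ Set.MapsTo φ UDisk Ω

/-- `G = F²` viewed as a complex-valued function on `ℂⁿ × ℂⁿ`. -/
def Gc (F : (Fin n → ℂ) → (Fin n → ℂ) → ℝ) : (Fin n → ℂ) × (Fin n → ℂ) → ℂ :=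
  fun x => ((F x.1 x.2 ^ 2 : ℝ) : ℂ)

/-- Basis direction in the `z` (first) component. -/
def bz (i : Fin n) : (Fin n → ℂ) × (Fin n → ℂ) := (Pi.single i 1, 0)

/-- Basis direction in the `v` (second) component. -/
def bv (α : Fin n) : (Fin n → ℂ) × (Fin n → ℂ) := (0, Pi.single α 1)

/-- Wirtinger derivative `∂f/∂w` in the complex direction `w`. -/
def wD (w : (Fin n → ℂ) × (Fin n → ℂ)) (f : (Fin n → ℂ) × (Fin n → ℂ) → ℂ) :
    (Fin n → ℂ) × (Fin n → ℂ) → ℂ :=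
  fun x => (1 / 2) * (fderiv ℝ f x w - Complex.I * fderiv ℝ f x (Complex.I • w))

/-- Conjugate Wirtinger derivative `∂f/∂w̄` in the complex direction `w`. -/
def wDbar (w : (Fin n → ℂ) × (Fin n → ℂ)) (f : (Fin n → ℂ) × (Fin n → ℂ) → ℂ) :
    (Fin n → ℂ) × (Fin n → ℂ) → ℂ :=
  fun x => (1 / 2) * (fderiv ℝ f x w + Complex.I * fderiv ℝ f x (Complex.I • w))

/-- `G_α = ∂G/∂v^α`. -/
def Gv (F : (Fin n → ℂ) → (Fin n → ℂ) → ℝ) (α : Fin n) := wD (bv α) (Gc F)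

/-- `G_β̄ = ∂G/∂v̄^β`. -/
def Gvb (F : (Fin n → ℂ) → (Fin n → ℂ) → ℝ) (β : Fin n) := wDbar (bv β) (Gc F)

/-- `G_{;i} = ∂G/∂z^i`. -/
def Gz (F : (Fin n → ℂ) → (Fin n → ℂ) → ℝ) (i : Fin n) := wD (bz i) (Gc F)

/-- `G_{αβ̄} = ∂²G/∂v^α∂v̄^β` (the Levi form). -/
def Gvvb (F : (Fin n → ℂ) → (Fin n → ℂ) → ℝ) (α β : Fin n) := wDbar (bv β) (Gv F α)

/-- `G_{αβ} = ∂²G/∂v^α∂v^β`. -/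
def Gvv (F : (Fin n → ℂ) → (Fin n → ℂ) → ℝ) (α β : Fin n) := wD (bv β) (Gv F α)

/-- `G_{β̄;i} = ∂²G/∂z^i∂v̄^β`. -/
def Gvbz (F : (Fin n → ℂ) → (Fin n → ℂ) → ℝ) (β i : Fin n) := wD (bz i) (Gvb F β)

/-- The Levi matrix `(G_{αβ̄})`. -/
def levi (F : (Fin n → ℂ) → (Fin n → ℂ) → ℝ) (x : (Fin n → ℂ) × (Fin n → ℂ)) :
    Matrix (Fin n) (Fin n) ℂ :=
  Matrix.of fun α β => Gvvb F α β x

/-- `(G^{αβ̄})`, the inverse matrix of the Levi matrix. -/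
def leviInv (F : (Fin n → ℂ) → (Fin n → ℂ) → ℝ) (x : (Fin n → ℂ) × (Fin n → ℂ)) :
    Matrix (Fin n) (Fin n) ℂ :=
  (levi F x)⁻¹

/-- `F` is smooth and strongly pseudoconvex: `G = F²` is `C^∞` off the zero section and
the Levi matrix is positive definite there. -/
def IsSSPC (Ω : Set (Fin n → ℂ)) (F : (Fin n → ℂ) → (Fin n → ℂ) → ℝ) : Prop :=
  ContDiffOn ℝ (⊤ : ℕ∞) (Gc F) (Ω ×ˢ {v : Fin n → ℂ | v ≠ 0}) ∧
    ∀ p ∈ Ω, ∀ v : Fin n → ℂ, v ≠ 0 → (levi F (p, v)).PosDef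

/-- `Γ^α_{;i} = G^{αμ̄}·G_{μ̄;i}`. -/
def GammaT (F : (Fin n → ℂ) → (Fin n → ℂ) → ℝ) (α i : Fin n) :
    (Fin n → ℂ) × (Fin n → ℂ) → ℂ :=
  fun x => ∑ μ, leviInv F x α μ * Gvbz F μ i x

/-- `Γ^α_{;ij̄} = ∂Γ^α_{;i}/∂z̄^j`. -/
def GammaZbar (F : (Fin n → ℂ) → (Fin n → ℂ) → ℝ) (α i j : Fin n) := wDbar (bz j) (GammaT F α i)

/-- `Γ^α_{μ̄;i} = ∂Γ^α_{;i}/∂v̄^μ`. -/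
def GammaVbar (F : (Fin n → ℂ) → (Fin n → ℂ) → ℝ) (α μ i : Fin n) := wDbar (bv μ) (GammaT F α i)

/-- `Σ^α_{;ij̄} = Γ^α_{;ij̄} − Γ^α_{μ̄;i}·Γ^{μ̄}_{;j̄}` (summed over `μ`). -/
def SigT (F : (Fin n → ℂ) → (Fin n → ℂ) → ℝ) (α i j : Fin n) :
    (Fin n → ℂ) × (Fin n → ℂ) → ℂ :=
  fun x => GammaZbar F α i j x - ∑ μ, GammaVbar F α μ i x * conj (GammaT F μ j x)

/-- Condition (♦): `[Γ^α_{;ij̄} − Γ^α_{μ̄;i}·Γ^{μ̄}_{;j̄}]·v^i·v̄^j = 2·G·v^α`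
for all `α`, all `p ∈ Ω`, and all `v ≠ 0`. -/
def CondDiamond (Ω : Set (Fin n → ℂ)) (F : (Fin n → ℂ) → (Fin n → ℂ) → ℝ) : Prop :=
  ∀ p ∈ Ω, ∀ v : Fin n → ℂ, v ≠ 0 → ∀ α,
    ∑ i, ∑ j, SigT F α i j (p, v) * v i * conj (v j) = 2 * Gc F (p, v) * v α

/-- The holomorphic curvature of a smooth strongly pseudoconvex Finsler metric:
`K_F(p;v) = −(2/G²)·G_α·Γ^α_{;ij̄}·v^i·v̄^j`. -/
def KF (F : (Fin n → ℂ) → (Fin n → ℂ) → ℝ) (x : (Fin n → ℂ) × (Fin n → ℂ)) : ℂ :=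
  (-2 / Gc F x ^ 2) *
    ∑ α, Gv F α x * ∑ i, ∑ j, GammaZbar F α i j x * x.2 i * conj (x.2 j)

/-- `H_{αiμ̄j̄} = ∂(G_{τμ̄}·Γ^τ_{;αj̄})/∂v^i − ∂(G_{τμ̄}·Γ^τ_{;ij̄})/∂v^α` (summed over `τ`). -/
def Htens (F : (Fin n → ℂ) → (Fin n → ℂ) → ℝ) (α i μ j : Fin n) :
    (Fin n → ℂ) × (Fin n → ℂ) → ℂ :=
  fun x =>
    wD (bv i) (fun y => ∑ τ, Gvvb F τ μ y * GammaZbar F τ α j y) x -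
      wD (bv α) (fun y => ∑ τ, Gvvb F τ μ y * GammaZbar F τ i j y) x

/-- Condition (H): `H_{αiμ̄j̄}·v̄^μ·v^i·v̄^j = 0` for all `α` and all `(p;v)`, `v ≠ 0`. -/
def CondH (Ω : Set (Fin n → ℂ)) (F : (Fin n → ℂ) → (Fin n → ℂ) → ℝ) : Prop :=
  ∀ p ∈ Ω, ∀ v : Fin n → ℂ, v ≠ 0 → ∀ α,
    ∑ i, ∑ μ, ∑ j, Htens F α i μ j (p, v) * conj (v μ) * v i * conj (v j) = 0

/-- The torsion tensor
`T_{αiμ̄} = (G_{iμ̄;α} − G_{iμ̄β}·Γ^β_{;α}) − (G_{αμ̄;i} − G_{αμ̄β}·Γ^β_{;i})`. -/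
def Ttens (F : (Fin n → ℂ) → (Fin n → ℂ) → ℝ) (α i μ : Fin n) :
    (Fin n → ℂ) × (Fin n → ℂ) → ℂ :=
  fun x =>
    (wD (bz α) (Gvvb F i μ) x - ∑ β, wD (bv β) (Gvvb F i μ) x * GammaT F β α x) -
      (wD (bz i) (Gvvb F α μ) x - ∑ β, wD (bv β) (Gvvb F α μ) x * GammaT F β i x)

/-- `F` is Kähler at `(p;v)`: `T_{αiμ̄}·v^i·v̄^μ = 0` for all `α`. -/
def KahlerAt (F : (Fin n → ℂ) → (Fin n → ℂ) → ℝ) (x : (Fin n → ℂ) × (Fin n → ℂ)) : Prop :=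
  ∀ α, ∑ i, ∑ μ, Ttens F α i μ x * x.2 i * conj (x.2 μ) = 0

/-- `F` is Kähler (everywhere). -/
def IsKahlerF (Ω : Set (Fin n → ℂ)) (F : (Fin n → ℂ) → (Fin n → ℂ) → ℝ) : Prop :=
  ∀ p ∈ Ω, ∀ v : Fin n → ℂ, v ≠ 0 → KahlerAt F (p, v)

/-- `A(ζ) = −2ζ̄/(1−|ζ|²)`. -/
def Afun (ζ : ℂ) : ℂ := -2 * (starRingEnd ℂ ζ) / ((1 - ‖ζ‖ ^ 2 : ℝ) : ℂ)

/-- A holomorphic solution of equation (†) on the disk of radius `r`: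
`(φ'')^α + A·(φ')^α + Γ^α_{;i}(φ;φ')·(φ')^i = 0`, with `φ'` nowhere vanishing. -/
def SolDagger (Ω : Set (Fin n → ℂ)) (F : (Fin n → ℂ) → (Fin n → ℂ) → ℝ) (r : ℝ)
    (φ : ℂ → Fin n → ℂ) : Prop :=
  DifferentiableOn ℂ φ (Metric.ball 0 r) ∧ Set.MapsTo φ (Metric.ball 0 r) Ω ∧
    (∀ ζ ∈ Metric.ball (0:ℂ) r, deriv φ ζ ≠ 0) ∧
    ∀ ζ ∈ Metric.ball (0:ℂ) r, ∀ α,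
      deriv (deriv φ) ζ α + Afun ζ * deriv φ ζ α +
        ∑ i, GammaT F α i (φ ζ, deriv φ ζ) * deriv φ ζ i = 0

/-- Equation (‡): `G_{αβ}(φ;φ')·[(φ'')^β + A·(φ')^β] = [G_{i;α} − G_{α;i}](φ;φ')·(φ')^i`. -/
def EqDDagger (F : (Fin n → ℂ) → (Fin n → ℂ) → ℝ) (r : ℝ) (φ : ℂ → Fin n → ℂ) : Prop :=
  ∀ ζ ∈ Metric.ball (0:ℂ) r, ∀ α,
    ∑ β, Gvv F α β (φ ζ, deriv φ ζ) * (deriv (deriv φ) ζ β + Afun ζ * deriv φ ζ β) =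
      ∑ i, (wD (bz α) (Gv F i) (φ ζ, deriv φ ζ) - wD (bz i) (Gv F α) (φ ζ, deriv φ ζ)) *
        deriv φ ζ i

abbrev EE (n : ℕ) := (Fin n → ℂ) × (Fin n → ℂ)

-- mini algebraic lemmas
lemma csmul_decomp (z : ℂ) (e : EE n) : z • e = z.re • e + z.im • (Complex.I • e) := by
  have h : z • e = ((z.re:ℂ) + (z.im:ℂ)*Complex.I) • e := by rw [Complex.re_add_im]
  rw [h, add_smul, mul_smul, Complex.coe_smul, Complex.coe_smul]

lemma miniW (L : EE n →L[ℝ] ℂ) (z : ℂ) (e : EE n) :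
    L (z • e) - Complex.I * L (z • Complex.I • e) =
      z * (L e - Complex.I * L (Complex.I • e)) := by
  rw [csmul_decomp z e, csmul_decomp z (Complex.I • e)]
  have hI : z.im • Complex.I • Complex.I • e = -(z.im • e) := by
    rw [smul_smul]
    norm_num [Complex.I_mul_I]
  rw [hI]
  simp only [map_add, map_neg, L.map_smul, Complex.real_smul]
  linear_combination (L e - Complex.I * L (Complex.I • e)) * (Complex.re_add_im z) +
    ((z.im : ℂ) * L (Complex.I • e)) * Complex.I_sq

lemma miniWbar (L : EE n →L[ℝ] ℂ) (z : ℂ) (e : EE n) :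
    L (z • e) + Complex.I * L (z • Complex.I • e) =
      conj z * (L e + Complex.I * L (Complex.I • e)) := by
  rw [csmul_decomp z e, csmul_decomp z (Complex.I • e)]
  have hI : z.im • Complex.I • Complex.I • e = -(z.im • e) := by
    rw [smul_smul]; norm_num [Complex.I_mul_I]
  rw [hI]
  simp only [map_add, map_neg, L.map_smul, Complex.real_smul]
  have hcz : (starRingEnd ℂ) z = (z.re : ℂ) - (z.im : ℂ) * Complex.I := by
    simp [Complex.ext_iff]
  rw [hcz]
  linear_combination ((z.im : ℂ) * L (Complex.I • e)) * Complex.I_sq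

lemma wD_congr {S : Set (EE n)} (hS : IsOpen S) {x : EE n} (hx : x ∈ S)
    {f g : EE n → ℂ} (h : ∀ y ∈ S, f y = g y) (w : EE n) : wD w f x = wD w g x := by
  have h' : f =ᶠ[nhds x] g := Filter.eventually_of_mem (hS.mem_nhds hx) h
  simp only [wD, h'.fderiv_eq]

lemma wD_sum {ι : Type*} (s : Finset ι) (f : ι → EE n → ℂ) (x : EE n) (w : EE n)
    (hf : ∀ i ∈ s, DifferentiableAt ℝ (f i) x) :
    wD w (fun y => ∑ i ∈ s, f i y) x = ∑ i ∈ s, wD w (f i) x := by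
  simp only [wD, fderiv_fun_sum hf, ContinuousLinearMap.coe_sum', Finset.sum_apply,
    Finset.mul_sum, ← Finset.sum_sub_distrib]

lemma wD_mul {f g : EE n → ℂ} {x : EE n} (hf : DifferentiableAt ℝ f x)
    (hg : DifferentiableAt ℝ g x) (w : EE n) :
    wD w (fun y => f y * g y) x = f x * wD w g x + g x * wD w f x := by
  simp only [wD, fderiv_fun_mul hf hg, ContinuousLinearMap.add_apply,
    ContinuousLinearMap.smul_apply, smul_eq_mul]
  ring

def cv (i : Fin n) : EE n →L[ℝ] ℂ :=
  (ContinuousLinearMap.proj i).comp (ContinuousLinearMap.snd ℝ (Fin n → ℂ) (Fin n → ℂ))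

def cvb (i : Fin n) : EE n →L[ℝ] ℂ :=
  Complex.conjCLE.toContinuousLinearMap.comp (cv i)

lemma hasF_cv (i : Fin n) (x : EE n) :
    HasFDerivAt (fun y : EE n => y.2 i) (cv i) x := (cv i).hasFDerivAt

lemma hasF_cvb (i : Fin n) (x : EE n) :
    HasFDerivAt (fun y : EE n => (starRingEnd ℂ) (y.2 i)) (cvb i) x := (cvb i).hasFDerivAt

lemma diff_cv (i : Fin n) (x : EE n) : DifferentiableAt ℝ (fun y : EE n => y.2 i) x :=
  (hasF_cv i x).differentiableAt

lemma diff_cvb (i : Fin n) (x : EE n) :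
    DifferentiableAt ℝ (fun y : EE n => (starRingEnd ℂ) (y.2 i)) x :=
  (hasF_cvb i x).differentiableAt

lemma wD_bv_coord (β i : Fin n) (x : EE n) :
    wD (bv β) (fun y : EE n => y.2 i) x = (Pi.single β (1:ℂ) : Fin n → ℂ) i := by
  simp only [wD, (hasF_cv i x).fderiv]
  simp [cv, bv, Pi.smul_apply, smul_eq_mul]
  ring_nf
  simp [Complex.I_sq]
  ring

lemma wD_bv_coordbar (β i : Fin n) (x : EE n) :
    wD (bv β) (fun y : EE n => (starRingEnd ℂ) (y.2 i)) x = 0 := by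
  simp only [wD, (hasF_cvb i x).fderiv]
  simp [cvb, cv, bv, Pi.smul_apply, smul_eq_mul, map_mul]
  linear_combination ((starRingEnd ℂ) ((Pi.single β (1:ℂ) : Fin n → ℂ) i)) * Complex.I_sq

lemma wD_bz_coord (j i : Fin n) (x : EE n) :
    wD (bz j) (fun y : EE n => y.2 i) x = 0 := by
  simp only [wD, (hasF_cv i x).fderiv]
  simp [cv, bz]

lemma wD_bz_coordbar (j i : Fin n) (x : EE n) :
    wD (bz j) (fun y : EE n => (starRingEnd ℂ) (y.2 i)) x = 0 := by
  simp only [wD, (hasF_cvb i x).fderiv]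
  simp [cvb, cv, bz]

lemma zero_v_decomp (v : Fin n → ℂ) :
    ((0 : Fin n → ℂ), v) = ∑ i, v i • bv i := by
  have h2 : v = ∑ i, v i • (Pi.single i (1:ℂ) : Fin n → ℂ) := by
    have h3 : ∀ i, v i • (Pi.single i (1:ℂ) : Fin n → ℂ) = Pi.single i (v i) := by
      intro i
      funext j
      simp [Pi.single_apply]
    simp only [h3, Finset.univ_sum_single]
  rw [Prod.ext_iff]
  constructor
  · simp [bv, Prod.fst_sum]
  · simpa [bv, Prod.snd_sum] using h2

/-- Sum of Wirtinger v-derivatives against `v` equals directional derivative combo. -/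
lemma wD_sum_dir (f : EE n → ℂ) (x : EE n) :
    ∑ i, wD (bv i) f x * x.2 i =
      (1/2) * (fderiv ℝ f x ((0 : Fin n → ℂ), x.2)
        - Complex.I * fderiv ℝ f x (Complex.I • ((0 : Fin n → ℂ), x.2))) := by
  set L := fderiv ℝ f x with hL
  have h0 : ((0 : Fin n → ℂ), x.2) = ∑ i, x.2 i • bv i := zero_v_decomp x.2
  have h1 : Complex.I • ((0 : Fin n → ℂ), x.2) = ∑ i, x.2 i • Complex.I • bv i := by
    rw [h0, Finset.smul_sum]
    exact Finset.sum_congr rfl fun i _ => smul_comm _ _ _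
  rw [h1, h0, map_sum, map_sum, Finset.mul_sum, ← Finset.sum_sub_distrib, Finset.mul_sum]
  refine Finset.sum_congr rfl fun i _ => ?_
  rw [miniW L (x.2 i) (bv i)]
  simp only [wD, ← hL]
  ring

lemma wDbar_sum_dir (f : EE n → ℂ) (x : EE n) :
    ∑ μ, wDbar (bv μ) f x * (starRingEnd ℂ) (x.2 μ) =
      (1/2) * (fderiv ℝ f x ((0 : Fin n → ℂ), x.2)
        + Complex.I * fderiv ℝ f x (Complex.I • ((0 : Fin n → ℂ), x.2))) := by
  set L := fderiv ℝ f x with hL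
  have h0 : ((0 : Fin n → ℂ), x.2) = ∑ i, x.2 i • bv i := zero_v_decomp x.2
  have h1 : Complex.I • ((0 : Fin n → ℂ), x.2) = ∑ i, x.2 i • Complex.I • bv i := by
    rw [h0, Finset.smul_sum]
    exact Finset.sum_congr rfl fun i _ => smul_comm _ _ _
  rw [h1, h0, map_sum, map_sum, Finset.mul_sum, ← Finset.sum_add_distrib, Finset.mul_sum]
  refine Finset.sum_congr rfl fun i _ => ?_
  rw [miniWbar L (x.2 i) (bv i)]
  simp only [wDbar, ← hL]
  ring

/-- Chain rule along the scaling path: `M = fderiv f x ∘ (w ↦ w • (0, x.2))`. -/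
lemma euler_core (f : EE n → ℂ) (x : EE n) (hd : DifferentiableAt ℝ f x)
    (M : ℂ →L[ℝ] ℂ) (hM : HasFDerivAt (fun l : ℂ => f (x.1, l • x.2)) M 1) :
    (∑ i, wD (bv i) f x * x.2 i = (1/2) * (M 1 - Complex.I * M Complex.I)) ∧
    (∑ μ, wDbar (bv μ) f x * (starRingEnd ℂ) (x.2 μ)
      = (1/2) * (M 1 + Complex.I * M Complex.I)) := by
  set c0 : EE n := ((0 : Fin n → ℂ), x.2) with hc0
  have hLγ : HasFDerivAt (fun l : ℂ => (x.1, l • x.2))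
      ((ContinuousLinearMap.id ℝ ℂ).smulRight c0) (1 : ℂ) := by
    have h : (fun l : ℂ => ((x.1, (0:Fin n → ℂ)) : EE n) + l • c0) =
        fun l : ℂ => ((x.1, l • x.2) : EE n) := by
      funext l
      simp [hc0, Prod.ext_iff]
    rw [← h]
    exact (((ContinuousLinearMap.id ℝ ℂ).smulRight c0).hasFDerivAt).const_add _
  have hγ1 : ((x.1, (1:ℂ) • x.2) : EE n) = x := by simp
  have hcomp : HasFDerivAt (fun l : ℂ => f (x.1, l • x.2))
      ((fderiv ℝ f x).comp ((ContinuousLinearMap.id ℝ ℂ).smulRight c0)) 1 := by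
    have hfd : HasFDerivAt f (fderiv ℝ f x) ((x.1, (1:ℂ) • x.2) : EE n) := by
      rw [hγ1]; exact hd.hasFDerivAt
    exact hfd.comp 1 hLγ
  have hMeq : M = (fderiv ℝ f x).comp ((ContinuousLinearMap.id ℝ ℂ).smulRight c0) :=
    hM.unique hcomp
  have hM1 : M 1 = fderiv ℝ f x c0 := by simp [hMeq]
  have hMI : M Complex.I = fderiv ℝ f x (Complex.I • c0) := by simp [hMeq]
  constructor
  · rw [wD_sum_dir f x, hM1, hMI]
  · rw [wDbar_sum_dir f x, hM1, hMI]

lemma contDiffOn_wD {S : Set (EE n)} (hS : IsOpen S) {f : EE n → ℂ}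
    (hf : ContDiffOn ℝ (⊤ : ℕ∞) f S) (w : EE n) : ContDiffOn ℝ (⊤ : ℕ∞) (wD w f) S := by
  have h1 : ContDiffOn ℝ (⊤ : ℕ∞) (fderiv ℝ f) S := hf.fderiv_of_isOpen hS (by simp)
  have h2 : ContDiffOn ℝ (⊤ : ℕ∞) (fun x => fderiv ℝ f x w) S := h1.clm_apply contDiffOn_const
  have h3 : ContDiffOn ℝ (⊤ : ℕ∞) (fun x => fderiv ℝ f x (Complex.I • w)) S :=
    h1.clm_apply contDiffOn_const
  exact contDiffOn_const.mul (h2.sub (contDiffOn_const.mul h3))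

lemma contDiffOn_wDbar {S : Set (EE n)} (hS : IsOpen S) {f : EE n → ℂ}
    (hf : ContDiffOn ℝ (⊤ : ℕ∞) f S) (w : EE n) : ContDiffOn ℝ (⊤ : ℕ∞) (wDbar w f) S := by
  have h1 : ContDiffOn ℝ (⊤ : ℕ∞) (fderiv ℝ f) S := hf.fderiv_of_isOpen hS (by simp)
  have h2 : ContDiffOn ℝ (⊤ : ℕ∞) (fun x => fderiv ℝ f x w) S := h1.clm_apply contDiffOn_const
  have h3 : ContDiffOn ℝ (⊤ : ℕ∞) (fun x => fderiv ℝ f x (Complex.I • w)) S :=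
    h1.clm_apply contDiffOn_const
  exact contDiffOn_const.mul (h2.add (contDiffOn_const.mul h3))

lemma diffAt_of {S : Set (EE n)} (hS : IsOpen S) {f : EE n → ℂ}
    (hf : ContDiffOn ℝ (⊤ : ℕ∞) f S) {x : EE n} (hx : x ∈ S) : DifferentiableAt ℝ f x :=
  (hf.contDiffAt (hS.mem_nhds hx)).differentiableAt (by simp)

lemma conj_hasF : HasFDerivAt (fun l : ℂ => (starRingEnd ℂ) l)
    Complex.conjCLE.toContinuousLinearMap (1 : ℂ) := by
  have h := Complex.conjCLE.toContinuousLinearMap.hasFDerivAt (x := (1:ℂ))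
  convert h using 1
  funext l; simp

lemma euler_11 (f : EE n → ℂ) (x : EE n) (hd : DifferentiableAt ℝ f x) (c : ℂ)
    (hh : ∀ᶠ l in nhds (1:ℂ), f (x.1, l • x.2) = l * (starRingEnd ℂ) l * c) :
    (∑ i, wD (bv i) f x * x.2 i = c) ∧
    (∑ μ, wDbar (bv μ) f x * (starRingEnd ℂ) (x.2 μ) = c) := by
  have hid : HasFDerivAt (fun l : ℂ => l) (ContinuousLinearMap.id ℝ ℂ) 1 := hasFDerivAt_id 1
  have hmul := (hid.mul conj_hasF).mul_const c
  have hM : HasFDerivAt (fun l : ℂ => f (x.1, l • x.2))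
      (c • ((1:ℂ) • Complex.conjCLE.toContinuousLinearMap +
        ((starRingEnd ℂ) 1) • ContinuousLinearMap.id ℝ ℂ)) 1 :=
    hmul.congr_of_eventuallyEq hh
  have h := euler_core f x hd _ hM
  constructor
  · rw [h.1]; simp [Complex.conjCLE_apply]; ring_nf
  · rw [h.2]; simp [Complex.conjCLE_apply]; ring_nf

lemma euler_01 (f : EE n → ℂ) (x : EE n) (hd : DifferentiableAt ℝ f x) (c : ℂ)
    (hh : ∀ᶠ l in nhds (1:ℂ), f (x.1, l • x.2) = (starRingEnd ℂ) l * c) :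
    ∑ μ, wDbar (bv μ) f x * (starRingEnd ℂ) (x.2 μ) = c := by
  have hmul := conj_hasF.mul_const c
  have hM : HasFDerivAt (fun l : ℂ => f (x.1, l • x.2))
      (c • Complex.conjCLE.toContinuousLinearMap) 1 := hmul.congr_of_eventuallyEq hh
  have h := euler_core f x hd _ hM
  rw [h.2]
  simp [Complex.conjCLE_apply]
  ring_nf
  simp [Complex.I_sq]
  ring



lemma wD_const (w : EE n) (c : ℂ) (x : EE n) : wD w (fun _ => c) x = 0 := by
  simp [wD, fderiv_const]

section Metric0

variable {n : ℕ} {Ω : Set (Fin n → ℂ)} {F : (Fin n → ℂ) → (Fin n → ℂ) → ℝ}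

lemma SS_open (hΩo : IsOpen Ω) : IsOpen (Ω ×ˢ {v : Fin n → ℂ | v ≠ 0}) :=
  hΩo.prod (isOpen_compl_singleton)

lemma mem_SS {x : EE n} (h1 : x.1 ∈ Ω) (h2 : x.2 ≠ 0) :
    x ∈ Ω ×ˢ {v : Fin n → ℂ | v ≠ 0} := ⟨h1, h2⟩

lemma Gc_homog (hF : IsFinsler Ω F) {x : EE n} (hx : x.1 ∈ Ω) (l : ℂ) :
    Gc F (x.1, l • x.2) = l * (starRingEnd ℂ) l * Gc F x := by
  have h := hF.2.2.2 x.1 hx x.2 l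
  have h2 : ((‖l‖ ^ 2 : ℝ) : ℂ) = l * (starRingEnd ℂ) l := by
    rw [Complex.sq_norm]
    push_cast
    exact (Complex.mul_conj l).symm
  simp only [Gc, h]
  push_cast
  rw [mul_pow, ← h2]
  push_cast
  ring

variable (hΩo : IsOpen Ω) (hF : IsFinsler Ω F)
  (hG : ContDiffOn ℝ (⊤ : ℕ∞) (Gc F) (Ω ×ˢ {v : Fin n → ℂ | v ≠ 0}))

include hΩo hF hG

lemma euler_Gc {x : EE n} (hx : x ∈ Ω ×ˢ {v : Fin n → ℂ | v ≠ 0}) :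
    (∑ i, Gv F i x * x.2 i = Gc F x) ∧
    (∑ μ, Gvb F μ x * (starRingEnd ℂ) (x.2 μ) = Gc F x) := by
  have hd : DifferentiableAt ℝ (Gc F) x := diffAt_of (SS_open hΩo) hG hx
  have hh : ∀ᶠ l in nhds (1:ℂ), Gc F (x.1, l • x.2) = l * (starRingEnd ℂ) l * Gc F x :=
    Filter.Eventually.of_forall fun l => Gc_homog hF hx.1 l
  exact euler_11 (Gc F) x hd (Gc F x) hh

lemma Gv_homog {x : EE n} (hx : x ∈ Ω ×ˢ {v : Fin n → ℂ | v ≠ 0}) {l : ℂ} (hl : l ≠ 0)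
    (i : Fin n) : Gv F i (x.1, l • x.2) = (starRingEnd ℂ) l * Gv F i x := by
  set M : EE n →L[ℝ] EE n :=
    (ContinuousLinearMap.fst ℝ (Fin n → ℂ) (Fin n → ℂ)).prod
      (l • ContinuousLinearMap.snd ℝ (Fin n → ℂ) (Fin n → ℂ)) with hM
  have hMy : ∀ y : EE n, M y = (y.1, l • y.2) := fun y => rfl
  have hMxS : M x ∈ Ω ×ˢ {v : Fin n → ℂ | v ≠ 0} := by
    refine mem_SS ?_ ?_
    · exact hx.1
    · exact smul_ne_zero hl hx.2
  have hdc : DifferentiableAt ℝ (Gc F) (M x) := diffAt_of (SS_open hΩo) hG hMxS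
  have hcomp : HasFDerivAt (fun y => Gc F (M y))
      ((fderiv ℝ (Gc F) (M x)).comp M) x := hdc.hasFDerivAt.comp x M.hasFDerivAt
  -- identity of functions on S
  have hid : ∀ y ∈ Ω ×ˢ {v : Fin n → ℂ | v ≠ 0},
      Gc F (M y) = (fun z => l * (starRingEnd ℂ) l * Gc F z) y := by
    intro y hy
    rw [hMy y]
    exact Gc_homog hF hy.1 l
  have hcongr := wD_congr (SS_open hΩo) hx hid (bv i)
  -- compute LHS of hcongr
  set L' := fderiv ℝ (Gc F) (M x) with hL'
  have hLHS : wD (bv i) (fun y => Gc F (M y)) x = l * Gv F i (M x) := by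
    simp only [wD, hcomp.fderiv, ContinuousLinearMap.coe_comp', Function.comp_apply]
    have h1 : M (bv i) = l • bv i := by
      rw [hMy (bv i)]
      simp [bv, Prod.ext_iff]
    have h2 : M (Complex.I • bv i) = l • Complex.I • bv i := by
      rw [hMy (Complex.I • bv i)]
      simp [bv, Prod.ext_iff, smul_comm l Complex.I]
    rw [h1, h2]
    rw [miniW L' l (bv i)]
    simp only [Gv, wD, ← hL']
    ring
  have hRHS : wD (bv i) (fun z => l * (starRingEnd ℂ) l * Gc F z) x
      = l * (starRingEnd ℂ) l * Gv F i x := by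
    have hdx : DifferentiableAt ℝ (Gc F) x := diffAt_of (SS_open hΩo) hG hx
    have := wD_mul (f := fun _ => l * (starRingEnd ℂ) l) (g := Gc F)
      (differentiableAt_const _) hdx (bv i)
    rw [this, wD_const]
    simp only [Gv]
    ring
  rw [hLHS, hRHS] at hcongr
  have h3 : l * Gv F i (M x) = l * ((starRingEnd ℂ) l * Gv F i x) := by
    linear_combination hcongr
  have h4 := mul_left_cancel₀ hl h3
  rw [hMy x] at h4
  exact h4

lemma euler_Gv {x : EE n} (hx : x ∈ Ω ×ˢ {v : Fin n → ℂ | v ≠ 0}) (i : Fin n) :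
    ∑ μ, Gvvb F i μ x * (starRingEnd ℂ) (x.2 μ) = Gv F i x := by
  have hd : DifferentiableAt ℝ (Gv F i) x :=
    diffAt_of (SS_open hΩo) (contDiffOn_wD (SS_open hΩo) hG (bv i)) hx
  have hne : ∀ᶠ l in nhds (1:ℂ), l ≠ (0:ℂ) :=
    eventually_ne_nhds (by norm_num)
  have hh : ∀ᶠ l in nhds (1:ℂ), Gv F i (x.1, l • x.2) = (starRingEnd ℂ) l * Gv F i x :=
    hne.mono fun l hl => Gv_homog hΩo hF hG hx hl i
  exact euler_01 (Gv F i) x hd (Gv F i x) hh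

lemma P3lem {x : EE n} (hx : x ∈ Ω ×ˢ {v : Fin n → ℂ | v ≠ 0}) (β : Fin n) :
    ∑ i, Gvv F i β x * x.2 i = 0 := by
  have hSo : IsOpen (Ω ×ˢ {v : Fin n → ℂ | v ≠ 0}) := SS_open hΩo
  have hdGv : ∀ i : Fin n, DifferentiableAt ℝ (Gv F i) x :=
    fun i => diffAt_of hSo (contDiffOn_wD hSo hG (bv i)) hx
  have hid : ∀ y ∈ Ω ×ˢ {v : Fin n → ℂ | v ≠ 0},
      (∑ i, Gv F i y * y.2 i) = Gc F y := fun y hy => (euler_Gc hΩo hF hG hy).1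
  have h1 := wD_congr hSo hx hid (bv β)
  have h2 : wD (bv β) (fun y => ∑ i, Gv F i y * y.2 i) x
      = ∑ i, wD (bv β) (fun y => Gv F i y * y.2 i) x :=
    wD_sum Finset.univ (fun i y => Gv F i y * y.2 i) x (bv β)
      (fun i _ => (hdGv i).mul (diff_cv i x))
  have h3 : ∀ i : Fin n, wD (bv β) (fun y => Gv F i y * y.2 i) x
      = Gv F i x * (Pi.single β (1:ℂ) : Fin n → ℂ) i + x.2 i * Gvv F i β x := by
    intro i
    rw [wD_mul (hdGv i) (diff_cv i x), wD_bv_coord]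
    rfl
  have h4 : ∑ i, Gv F i x * (Pi.single β (1:ℂ) : Fin n → ℂ) i = Gv F β x := by
    simp [Pi.single_apply, mul_ite]
  have h5 : wD (bv β) (Gc F) x = Gv F β x := rfl
  rw [h2, h5] at h1
  simp only [h3] at h1
  rw [Finset.sum_add_distrib, h4] at h1
  have h6 : ∑ i, x.2 i * Gvv F i β x = 0 := by linear_combination h1
  calc ∑ i, Gvv F i β x * x.2 i = ∑ i, x.2 i * Gvv F i β x :=
        Finset.sum_congr rfl fun i _ => mul_comm _ _
    _ = 0 := h6


lemma P2P1core {x : EE n} (hx : x ∈ Ω ×ˢ {v : Fin n → ℂ | v ≠ 0}) (i : Fin n) (w : EE n)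
    (hw : ∀ μ : Fin n, wD w (fun y : EE n => (starRingEnd ℂ) (y.2 μ)) x = 0) :
    ∑ μ, wD w (Gvvb F i μ) x * (starRingEnd ℂ) (x.2 μ) = wD w (Gv F i) x := by
  have hSo : IsOpen (Ω ×ˢ {v : Fin n → ℂ | v ≠ 0}) := SS_open hΩo
  have hdGvvb : ∀ μ : Fin n, DifferentiableAt ℝ (Gvvb F i μ) x := fun μ =>
    diffAt_of hSo (contDiffOn_wDbar hSo (contDiffOn_wD hSo hG (bv i)) (bv μ)) hx
  have hid : ∀ y ∈ Ω ×ˢ {v : Fin n → ℂ | v ≠ 0},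
      (∑ μ, Gvvb F i μ y * (starRingEnd ℂ) (y.2 μ)) = Gv F i y :=
    fun y hy => euler_Gv hΩo hF hG hy i
  have h1 := wD_congr hSo hx hid w
  have h2 : wD w (fun y => ∑ μ, Gvvb F i μ y * (starRingEnd ℂ) (y.2 μ)) x
      = ∑ μ, wD w (fun y => Gvvb F i μ y * (starRingEnd ℂ) (y.2 μ)) x :=
    wD_sum Finset.univ _ x w (fun μ _ => (hdGvvb μ).mul (diff_cvb μ x))
  have h3 : ∀ μ : Fin n, wD w (fun y => Gvvb F i μ y * (starRingEnd ℂ) (y.2 μ)) x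
      = (starRingEnd ℂ) (x.2 μ) * wD w (Gvvb F i μ) x := by
    intro μ
    rw [wD_mul (hdGvvb μ) (diff_cvb μ x), hw μ]
    ring
  rw [h2] at h1
  simp only [h3] at h1
  rw [← h1]
  exact Finset.sum_congr rfl fun μ _ => mul_comm _ _

lemma P2lem {x : EE n} (hx : x ∈ Ω ×ˢ {v : Fin n → ℂ | v ≠ 0}) (i β : Fin n) :
    ∑ μ, wD (bv β) (Gvvb F i μ) x * (starRingEnd ℂ) (x.2 μ) = Gvv F i β x :=
  P2P1core hΩo hF hG hx i (bv β) (fun μ => wD_bv_coordbar β μ x)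

lemma P1lem {x : EE n} (hx : x ∈ Ω ×ˢ {v : Fin n → ℂ | v ≠ 0}) (i j : Fin n) :
    ∑ μ, wD (bz j) (Gvvb F i μ) x * (starRingEnd ℂ) (x.2 μ) = wD (bz j) (Gv F i) x :=
  P2P1core hΩo hF hG hx i (bz j) (fun μ => wD_bz_coordbar j μ x)


omit hΩo hF hG in
lemma sumswap (g : Fin n → Fin n → ℂ) (Γ c : Fin n → ℂ) :
    ∑ μ, (∑ β, g β μ * Γ β) * c μ = ∑ β, (∑ μ, g β μ * c μ) * Γ β := by
  have h1 : ∀ μ, (∑ β, g β μ * Γ β) * c μ = ∑ β, g β μ * Γ β * c μ :=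
    fun μ => Finset.sum_mul _ _ _
  have h2 : ∀ β, (∑ μ, g β μ * c μ) * Γ β = ∑ μ, g β μ * Γ β * c μ := by
    intro β
    rw [Finset.sum_mul]
    exact Finset.sum_congr rfl fun μ _ => by ring
  simp only [h1, h2]
  exact Finset.sum_comm

lemma keylem {x : EE n} (hx : x ∈ Ω ×ˢ {v : Fin n → ℂ | v ≠ 0}) (α : Fin n) :
    ∑ i, ∑ μ, Ttens F α i μ x * x.2 i * (starRingEnd ℂ) (x.2 μ)
      = ∑ i, (wD (bz α) (Gv F i) x - wD (bz i) (Gv F α) x) * x.2 i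
        + ∑ i, (∑ β, Gvv F α β x * GammaT F β i x) * x.2 i := by
  have hper : ∀ i, ∑ μ, Ttens F α i μ x * x.2 i * (starRingEnd ℂ) (x.2 μ)
      = (wD (bz α) (Gv F i) x - wD (bz i) (Gv F α) x) * x.2 i
        + (∑ β, Gvv F α β x * GammaT F β i x) * x.2 i
        - (∑ β, Gvv F i β x * GammaT F β α x) * x.2 i := by
    intro i
    have e1 := P1lem hΩo hF hG hx i α
    have e3 := P1lem hΩo hF hG hx α i
    have hT : ∀ μ, Ttens F α i μ x * x.2 i * (starRingEnd ℂ) (x.2 μ)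
        = (wD (bz α) (Gvvb F i μ) x * (starRingEnd ℂ) (x.2 μ)
            - (∑ β, wD (bv β) (Gvvb F i μ) x * GammaT F β α x) * (starRingEnd ℂ) (x.2 μ)
            - wD (bz i) (Gvvb F α μ) x * (starRingEnd ℂ) (x.2 μ)
            + (∑ β, wD (bv β) (Gvvb F α μ) x * GammaT F β i x) * (starRingEnd ℂ) (x.2 μ))
            * x.2 i := by
      intro μ
      simp only [Ttens]
      ring
    simp only [hT]
    rw [← Finset.sum_mul]
    have hsplit : ∑ μ, (wD (bz α) (Gvvb F i μ) x * (starRingEnd ℂ) (x.2 μ)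
            - (∑ β, wD (bv β) (Gvvb F i μ) x * GammaT F β α x) * (starRingEnd ℂ) (x.2 μ)
            - wD (bz i) (Gvvb F α μ) x * (starRingEnd ℂ) (x.2 μ)
            + (∑ β, wD (bv β) (Gvvb F α μ) x * GammaT F β i x) * (starRingEnd ℂ) (x.2 μ))
        = (∑ μ, wD (bz α) (Gvvb F i μ) x * (starRingEnd ℂ) (x.2 μ))
            - (∑ μ, (∑ β, wD (bv β) (Gvvb F i μ) x * GammaT F β α x)
                * (starRingEnd ℂ) (x.2 μ))
            - (∑ μ, wD (bz i) (Gvvb F α μ) x * (starRingEnd ℂ) (x.2 μ))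
            + (∑ μ, (∑ β, wD (bv β) (Gvvb F α μ) x * GammaT F β i x)
                * (starRingEnd ℂ) (x.2 μ)) := by
      rw [Finset.sum_add_distrib, Finset.sum_sub_distrib, Finset.sum_sub_distrib]
    rw [hsplit, e1, e3,
      sumswap (fun β μ => wD (bv β) (Gvvb F i μ) x) (fun β => GammaT F β α x) _,
      sumswap (fun β μ => wD (bv β) (Gvvb F α μ) x) (fun β => GammaT F β i x) _]
    have e2 : ∀ β, (∑ μ, wD (bv β) (Gvvb F i μ) x * (starRingEnd ℂ) (x.2 μ)) = Gvv F i β x :=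
      fun β => P2lem hΩo hF hG hx i β
    have e4 : ∀ β, (∑ μ, wD (bv β) (Gvvb F α μ) x * (starRingEnd ℂ) (x.2 μ)) = Gvv F α β x :=
      fun β => P2lem hΩo hF hG hx α β
    simp only [e2, e4]
    ring
  simp only [hper]
  have hz : ∑ i, (∑ β, Gvv F i β x * GammaT F β α x) * x.2 i = 0 := by
    rw [sumswap (fun β i => Gvv F i β x) (fun β => GammaT F β α x) (fun i => x.2 i)]
    have : ∀ β, (∑ i, Gvv F i β x * x.2 i) = 0 := fun β => P3lem hΩo hF hG hx β
    simp only [this, zero_mul, Finset.sum_const_zero]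
  rw [Finset.sum_sub_distrib, Finset.sum_add_distrib, hz, sub_zero]


end Metric0

/-- A holomorphic solution `φ` of (†) is a segment of geodesic complex curve (i.e. it also
satisfies (‡)) iff `F` is Kähler along `φ`. -/
theorem stmt_10 {n : ℕ} (hn : 1 ≤ n) (Ω : Set (Fin n → ℂ)) (hΩ : IsDomainSet Ω)
    (F : (Fin n → ℂ) → (Fin n → ℂ) → ℝ) (hF : IsFinsler Ω F) (hs : IsSSPC Ω F)
    (r : ℝ) (hr : 0 < r) (hr1 : r ≤ 1) (φ : ℂ → Fin n → ℂ) (hφ : SolDagger Ω F r φ) :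
    EqDDagger F r φ ↔
      ∀ ζ ∈ Metric.ball (0:ℂ) r, KahlerAt F (φ ζ, deriv φ ζ) := by
  obtain ⟨hΩo, -⟩ := hΩ
  have hG := hs.1
  have hmain : ∀ ζ ∈ Metric.ball (0:ℂ) r, ∀ α : Fin n,
      ((∑ β, Gvv F α β (φ ζ, deriv φ ζ) *
          (deriv (deriv φ) ζ β + Afun ζ * deriv φ ζ β) =
        ∑ i, (wD (bz α) (Gv F i) (φ ζ, deriv φ ζ) -
          wD (bz i) (Gv F α) (φ ζ, deriv φ ζ)) * deriv φ ζ i) ↔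
      (∑ i, ∑ μ, Ttens F α i μ (φ ζ, deriv φ ζ) * deriv φ ζ i *
        (starRingEnd ℂ) (deriv φ ζ μ) = 0)) := by
    intro ζ hζ α
    have hx : ((φ ζ, deriv φ ζ) : EE n) ∈ Ω ×ˢ {v : Fin n → ℂ | v ≠ 0} :=
      ⟨hφ.2.1 hζ, hφ.2.2.1 ζ hζ⟩
    have hk := keylem hΩo hF hG hx α
    dsimp only at hk
    have hode : ∀ β : Fin n, deriv (deriv φ) ζ β + Afun ζ * deriv φ ζ β
        = -∑ i, GammaT F β i (φ ζ, deriv φ ζ) * deriv φ ζ i := by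
      intro β
      have := hφ.2.2.2 ζ hζ β
      linear_combination this
    have hL : ∑ β, Gvv F α β (φ ζ, deriv φ ζ) *
        (deriv (deriv φ) ζ β + Afun ζ * deriv φ ζ β)
        = -∑ i, (∑ β, Gvv F α β (φ ζ, deriv φ ζ) * GammaT F β i (φ ζ, deriv φ ζ)) *
            deriv φ ζ i := by
      simp only [hode]
      have h1 : ∀ β : Fin n, Gvv F α β (φ ζ, deriv φ ζ) *
          -(∑ i, GammaT F β i (φ ζ, deriv φ ζ) * deriv φ ζ i)
          = -∑ i, Gvv F α β (φ ζ, deriv φ ζ) * GammaT F β i (φ ζ, deriv φ ζ) *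
              deriv φ ζ i := by
        intro β
        rw [mul_neg, Finset.mul_sum]
        simp only [mul_assoc]
      simp only [h1]
      rw [Finset.sum_neg_distrib, neg_inj, Finset.sum_comm]
      exact Finset.sum_congr rfl fun i _ => (Finset.sum_mul _ _ _).symm
    constructor
    · intro hd
      linear_combination hk + hL - hd
    · intro hkah
      linear_combination hL + hk - hkah
  constructor
  · intro h ζ hζ α
    exact (hmain ζ hζ α).1 (h ζ hζ α)
  · intro h ζ hζ α
    exact (hmain ζ hζ α).2 (h ζ hζ α)
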